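/- arXiv:2303.03950 — 3 statements merged into one kernel-verified Lean document; each statement's English description precedes it below -/
import Mathlib

section
/- Let h : ℝ^{d_in} → [0,∞) be continuous and let H be an affine hyperplane containing a point x₀ with h(x₀) > 0. Then the set {x ∈ H : h(x) > 0} cannot be covered by finitely many affine hyperplanes different from H. -/
/-!
Every hyperplane `Hᵢ` through `x₀` is different from `H`, so its normal is not a multiple of that
of `H` and it cuts the direction space of `H` in a proper subspace. A real vector space is not a
finite union of proper subspaces, so some direction `v` of `H` is transversal to all these `Hᵢ`.
The line `x₀ + t • v` then lies in `H`, meets each `Hᵢ` in at most one point, and stays in the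
open set `{h > 0}` for infinitely many `t`, so one of its points escapes the cover.
-/

open Set

theorem Submodule.exists_mem_forall_apply_ne_zero {K V ι : Type*} [Field K] [Infinite K]
    [AddCommGroup V] [Module K V] [Finite ι] (p : Submodule K V) (g : ι → V →ₗ[K] K)
    (hg : ∀ i, ∃ w ∈ p, g i w ≠ 0) : ∃ v ∈ p, ∀ i, g i v ≠ 0 := by
  by_contra! hv
  have hcover : ⋃ i, (LinearMap.ker ((g i).comp p.subtype) : Set p) = univ :=
    eq_univ_of_forall fun w => mem_iUnion.2 (by simpa using hv w w.2)
  obtain ⟨i, hi⟩ := Subspace.exists_eq_top_of_iUnion_eq_univ hcover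
  obtain ⟨w, hwp, hw⟩ := hg i
  exact hw (by simpa using hi.ge (Submodule.mem_top (x := ⟨w, hwp⟩)))

theorem exists_smul_eq_of_forall_inner_eq_zero_imp {E : Type*} [NormedAddCommGroup E]
    [InnerProductSpace ℝ E] {n n' : E} (h : ∀ w, inner ℝ n w = (0 : ℝ) → inner ℝ n' w = (0 : ℝ)) :
    ∃ c : ℝ, c • n = n' := by
  have : n' ∈ (ℝ ∙ n)ᗮᗮ := by
    rw [Submodule.mem_orthogonal]
    intro u hu
    rw [real_inner_comm]
    exact h u (Submodule.mem_orthogonal_singleton_iff_inner_right.1 hu)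
  rwa [Submodule.orthogonal_orthogonal, Submodule.mem_span_singleton] at this

theorem exists_inner_eq_zero_inner_ne_zero {E : Type*} [NormedAddCommGroup E]
    [InnerProductSpace ℝ E] {n n' x₀ : E} {o o' : ℝ} (hn' : n' ≠ 0)
    (hx₀ : inner ℝ n x₀ = o) (hx₀' : inner ℝ n' x₀ = o')
    (hne : {x : E | inner ℝ n' x = o'} ≠ {x : E | inner ℝ n x = o}) :
    ∃ w, inner ℝ n w = (0 : ℝ) ∧ inner ℝ n' w ≠ (0 : ℝ) := by
  by_contra! h
  obtain ⟨c, rfl⟩ := exists_smul_eq_of_forall_inner_eq_zero_imp h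
  have hc : c ≠ 0 := by rintro rfl; simp at hn'
  refine hne (Set.ext fun x => ?_)
  simp only [mem_ofPred_eq, ← hx₀', ← hx₀, real_inner_smul_left]
  exact mul_right_inj' hc

theorem subsingleton_setOf_add_mul_eq {a b c : ℝ} (h : b ≠ 0 ∨ a ≠ c) :
    {t : ℝ | a + t * b = c}.Subsingleton := by
  intro t ht s hs
  have hb : b ≠ 0 := fun hb => h.elim (· hb) (· (by simpa [hb] using ht.out))
  exact mul_right_cancel₀ hb (by linarith [ht.out, hs.out])

theorem exists_add_smul_mem_forall_notMem {E ι : Type*} [TopologicalSpace E] [AddCommGroup E]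
    [Module ℝ E] [ContinuousAdd E] [ContinuousSMul ℝ E] [Finite ι] {U : Set E} (hU : IsOpen U)
    {x₀ : E} (hx₀ : x₀ ∈ U) (v : E) (S : ι → Set E)
    (hS : ∀ i, {t : ℝ | x₀ + t • v ∈ S i}.Subsingleton) :
    ∃ t : ℝ, x₀ + t • v ∈ U ∧ ∀ i, x₀ + t • v ∉ S i := by
  have hline : Continuous fun t : ℝ => x₀ + t • v := by fun_prop
  have hopen : {t : ℝ | x₀ + t • v ∈ U}.Infinite :=
    infinite_of_mem_nhds (0 : ℝ) ((hU.preimage hline).mem_nhds (by simpa using hx₀))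
  obtain ⟨t, htU, htS⟩ :=
    (hopen.sdiff (finite_iUnion fun i => (hS i).finite)).nonempty
  exact ⟨t, htU, fun i hi => htS (mem_iUnion.2 ⟨i, hi⟩)⟩

theorem stmt5_general (din : ℕ)
    (h : EuclideanSpace ℝ (Fin din) → ℝ) (hc : Continuous h)
    (n : EuclideanSpace ℝ (Fin din)) (o : ℝ)
    (x₀ : EuclideanSpace ℝ (Fin din)) (hx₀ : (inner ℝ n x₀ : ℝ) = o) (hpos : 0 < h x₀)
    (m : ℕ) (ns : Fin m → EuclideanSpace ℝ (Fin din)) (os : Fin m → ℝ)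
    (hns : ∀ i, ns i ≠ 0)
    (hdiff : ∀ i, {x : EuclideanSpace ℝ (Fin din) | (inner ℝ (ns i) x : ℝ) = os i} ≠
      {x : EuclideanSpace ℝ (Fin din) | (inner ℝ n x : ℝ) = o}) :
    ¬ ({x : EuclideanSpace ℝ (Fin din) | (inner ℝ n x : ℝ) = o ∧ 0 < h x} ⊆
        ⋃ i, {x : EuclideanSpace ℝ (Fin din) | (inner ℝ (ns i) x : ℝ) = os i}) := by
  intro hsub
  obtain ⟨v, hvn, hv⟩ := (ℝ ∙ n)ᗮ.exists_mem_forall_apply_ne_zero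
    (fun j : {i // inner ℝ (ns i) x₀ = os i} => innerₛₗ ℝ (ns j)) fun j => by
      obtain ⟨w, hw, hw'⟩ := exists_inner_eq_zero_inner_ne_zero (hns j) hx₀ j.2 (hdiff j)
      exact ⟨w, Submodule.mem_orthogonal_singleton_iff_inner_right.2 hw, hw'⟩
  rw [Submodule.mem_orthogonal_singleton_iff_inner_right] at hvn
  obtain ⟨t, ht, htS⟩ := exists_add_smul_mem_forall_notMem (isOpen_lt continuous_const hc)
    hpos v (fun i => {x | inner ℝ (ns i) x = os i}) fun i => by
      simp only [mem_ofPred_eq, inner_add_right, real_inner_smul_right]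
      exact subsingleton_setOf_add_mul_eq (or_iff_not_imp_right.2 fun hi => hv ⟨i, not_not.1 hi⟩)
  refine (mem_iUnion.1 (hsub ⟨?_, ht⟩)).elim htS
  simp [inner_add_right, real_inner_smul_right, hvn, hx₀]

/-- if a continuous nonnegative function `h` is positive at a point of a
hyperplane `H`, then `{x ∈ H : h x > 0}` cannot be covered by finitely many
hyperplanes different from `H`. -/
theorem stmt5 (din : ℕ) (hdin : 1 ≤ din)
    (h : EuclideanSpace ℝ (Fin din) → ℝ) (hc : Continuous h) (hnn : ∀ x, 0 ≤ h x)
    (n : EuclideanSpace ℝ (Fin din)) (hn : n ≠ 0) (o : ℝ)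
    (x₀ : EuclideanSpace ℝ (Fin din)) (hx₀ : (inner ℝ n x₀ : ℝ) = o) (hpos : 0 < h x₀)
    (m : ℕ) (ns : Fin m → EuclideanSpace ℝ (Fin din)) (os : Fin m → ℝ)
    (hns : ∀ i, ns i ≠ 0)
    (hdiff : ∀ i, {x : EuclideanSpace ℝ (Fin din) | (inner ℝ (ns i) x : ℝ) = os i} ≠
      {x : EuclideanSpace ℝ (Fin din) | (inner ℝ n x : ℝ) = o}) :
    ¬ ({x : EuclideanSpace ℝ (Fin din) | (inner ℝ n x : ℝ) = o ∧ 0 < h x} ⊆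
        ⋃ i, {x : EuclideanSpace ℝ (Fin din) | (inner ℝ (ns i) x : ℝ) = os i}) :=
  stmt5_general din h hc n o x₀ hx₀ hpos m ns os hns hdiff
end

section
/- Let A = {x ∈ ℝ^{d_in} : n·x > o} be an open half-space with unit normal n, and let δ ∈ ℝ^{d_in}, 𝔟 ∈ ℝ. The function g(x) = 1_A(x)(δ·x + 𝔟) is continuous on ℝ^{d_in} if and only if ∂A = {x : n·x = o} is contained in {x : δ·x + 𝔟 = 0}. -/
open Set

theorem Continuous.continuous_indicator_iff {α β : Type*} [TopologicalSpace α]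
    [TopologicalSpace β] [T2Space β] [Zero β] {s : Set α} {f : α → β} (hf : Continuous f) :
    Continuous (s.indicator f) ↔ ∀ x ∈ frontier s, f x = 0 := by
  refine ⟨fun hc x hx => ?_, hf.indicator⟩
  rw [frontier_eq_closure_inter_closure] at hx
  have on_closure : EqOn (s.indicator f) f (closure s) := eqOn_indicator.closure hc hf
  have on_closure_compl : EqOn (s.indicator f) 0 (closure sᶜ) :=
    eqOn_indicator'.closure hc continuous_const
  rw [← on_closure hx.1, on_closure_compl hx.2, Pi.zero_apply]

theorem ContinuousLinearMap.frontier_preimage_of_ne_zero {R M : Type*} [TopologicalSpace R]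
    [DivisionRing R] [ContinuousSub R] [AddCommGroup M] [TopologicalSpace M] [ContinuousAdd M]
    [Module R M] [ContinuousSMul R M] (φ : StrongDual R M) (hφ : φ ≠ 0) (s : Set R) :
    frontier (φ ⁻¹' s) = φ ⁻¹' frontier s :=
  ((φ.isOpenMap_of_ne_zero hφ).preimage_frontier_eq_frontier_preimage φ.continuous s).symm

theorem frontier_setOf_lt_inner {E : Type*} [NormedAddCommGroup E] [InnerProductSpace ℝ E]
    {n : E} (hn : n ≠ 0) (o : ℝ) :
    frontier {y : E | o < inner ℝ n y} = {y : E | inner ℝ n y = o} := by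
  have hφ : innerSL ℝ n ≠ 0 := by
    rwa [← norm_ne_zero_iff, innerSL_apply_norm, norm_ne_zero_iff]
  have h := (innerSL ℝ n).frontier_preimage_of_ne_zero hφ (Ioi o)
  rw [frontier_Ioi] at h
  exact h

theorem stmt18_general (din : ℕ)
    (n : EuclideanSpace ℝ (Fin din)) (hn : ‖n‖ = 1) (o : ℝ)
    (δ : EuclideanSpace ℝ (Fin din)) (𝔟 : ℝ) :
    Continuous (Set.indicator {y : EuclideanSpace ℝ (Fin din) | (inner ℝ n y : ℝ) > o}
        (fun y => (inner ℝ δ y : ℝ) + 𝔟)) ↔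
      {x : EuclideanSpace ℝ (Fin din) | (inner ℝ n x : ℝ) = o} ⊆
        {x : EuclideanSpace ℝ (Fin din) | (inner ℝ δ x : ℝ) + 𝔟 = 0} := by
  have hn₀ : n ≠ 0 := by
    rintro rfl
    simp at hn
  rw [Continuous.continuous_indicator_iff (by fun_prop)]
  simp only [gt_iff_lt, frontier_setOf_lt_inner hn₀]
  rfl

/-- `1_A(x)(δ·x + 𝔟)` is continuous iff the boundary hyperplane of the
half-space `A = {x : n·x > o}` is contained in the zero set of `x ↦ δ·x + 𝔟`. -/
theorem stmt18 (din : ℕ) (hdin : 1 ≤ din)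
    (n : EuclideanSpace ℝ (Fin din)) (hn : ‖n‖ = 1) (o : ℝ)
    (δ : EuclideanSpace ℝ (Fin din)) (𝔟 : ℝ) :
    Continuous (Set.indicator {y : EuclideanSpace ℝ (Fin din) | (inner ℝ n y : ℝ) > o}
        (fun y => (inner ℝ δ y : ℝ) + 𝔟)) ↔
      {x : EuclideanSpace ℝ (Fin din) | (inner ℝ n x : ℝ) = o} ⊆
        {x : EuclideanSpace ℝ (Fin din) | (inner ℝ δ x : ℝ) + 𝔟 = 0} :=
  stmt18_general din n hn o δ 𝔟
end

section
/- Let (n^{(m)}) be a sequence of unit vectors in ℝ^{d_in} converging to a unit vector n, (o^{(m)}) reals converging to o ∈ ℝ, (δ^{(m)}) ⊂ ℝ^{d_in} converging to δ, and (𝔟^{(m)}) ⊂ ℝ converging to 𝔟. Assume for each m that {x : n^{(m)}·x = o^{(m)}} ⊆ {x : δ^{(m)}·x + 𝔟^{(m)} = 0} (each summand is continuous). Then {x : n·x = o} ⊆ {x : δ·x + 𝔟 = 0}, i.e. the limit summand x ↦ 1_{\{n·x>o\}}(x)(δ·x + 𝔟) is also continuous; moreover δ is a scalar multiple of n and δ·(o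 n) + 𝔟 = 0. -/
open Filter

/-! Projecting a point `x` of `{n·x = o}` orthogonally onto the hyperplanes `{n⁽ᵐ⁾·x = o⁽ᵐ⁾}` gives
points `xₘ → x` at which `δ⁽ᵐ⁾·xₘ + 𝔟⁽ᵐ⁾ = 0`; passing to the limit, `δ·x + 𝔟 = 0`. An affine
function vanishing on the hyperplane `{n·x = o}` vanishes at every projection onto it, which
forces its linear part to be a multiple of `n`. -/

section Hyperplane

variable {E : Type*} [NormedAddCommGroup E] [InnerProductSpace ℝ E]

/-- Orthogonal projection onto `{y | ⟪u, y⟫ = o}`, for a unit vector `u`. -/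
def hyperplaneProj (u : E) (o : ℝ) (x : E) : E := x + (o - inner ℝ u x) • u

theorem inner_hyperplaneProj {u : E} (hu : ‖u‖ = 1) (o : ℝ) (x : E) :
    inner ℝ u (hyperplaneProj u o x) = o := by
  rw [hyperplaneProj, inner_add_right, real_inner_smul_right, real_inner_self_eq_norm_sq, hu]
  ring

theorem hyperplaneProj_of_inner_eq {u : E} {o : ℝ} {x : E} (hx : inner ℝ u x = o) :
    hyperplaneProj u o x = x := by
  simp [hyperplaneProj, hx]

theorem Filter.Tendsto.hyperplaneProj {α : Type*} {l : Filter α} {us : α → E} {u : E}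
    {os : α → ℝ} {o : ℝ} {xs : α → E} {x : E} (hu : Tendsto us l (nhds u))
    (ho : Tendsto os l (nhds o)) (hx : Tendsto xs l (nhds x)) :
    Tendsto (fun a => hyperplaneProj (us a) (os a) (xs a)) l (nhds (hyperplaneProj u o x)) :=
  hx.add ((ho.sub (hu.inner hx)).smul hu)

theorem hyperplane_subset_of_tendsto {α : Type*} {l : Filter α} [l.NeBot]
    {ns : α → E} (hns : ∀ a, ‖ns a‖ = 1) {n : E} (hn : Tendsto ns l (nhds n))
    {os : α → ℝ} {o : ℝ} (ho : Tendsto os l (nhds o))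
    {δs : α → E} {δ : E} (hδ : Tendsto δs l (nhds δ))
    {bs : α → ℝ} {b : ℝ} (hb : Tendsto bs l (nhds b))
    (hincl : ∀ a, {x | inner ℝ (ns a) x = os a} ⊆ {x | inner ℝ (δs a) x + bs a = 0}) :
    {x | inner ℝ n x = o} ⊆ {x | inner ℝ δ x + b = 0} := by
  intro x hx
  have hproj : Tendsto (fun a => hyperplaneProj (ns a) (os a) x) l (nhds x) := by
    simpa only [hyperplaneProj_of_inner_eq hx] using
      hn.hyperplaneProj ho (tendsto_const_nhds (x := x))
  have hzero : ∀ a, inner ℝ (δs a) (hyperplaneProj (ns a) (os a) x) + bs a = 0 := fun a =>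
    hincl a (inner_hyperplaneProj (hns a) (os a) x)
  exact tendsto_nhds_unique ((hδ.inner hproj).add hb) (by simp only [hzero, tendsto_const_nhds])

theorem eq_inner_smul_of_hyperplane_subset {n : E} (hn : ‖n‖ = 1) {o : ℝ} {δ : E} {b : ℝ}
    (hincl : {x | inner ℝ n x = o} ⊆ {x | inner ℝ δ x + b = 0}) :
    δ = inner ℝ δ n • n := by
  have hproj (x : E) : inner ℝ (δ - inner ℝ δ n • n) x + (o * inner ℝ δ n + b) = 0 := by
    have := hincl (inner_hyperplaneProj hn o x)
    simp only [Set.mem_ofPred_eq, hyperplaneProj, inner_add_right, real_inner_smul_right] at this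
    rw [inner_sub_left, real_inner_smul_left]
    linarith
  have hconst : o * inner ℝ δ n + b = 0 := by simpa using hproj 0
  rw [← sub_eq_zero, ← inner_self_eq_zero (𝕜 := ℝ)]
  simpa [hconst] using hproj (δ - inner ℝ δ n • n)

end Hyperplane

theorem stmt19_general (din : ℕ)
    (ns : ℕ → EuclideanSpace ℝ (Fin din)) (hns : ∀ m, ‖ns m‖ = 1)
    (n : EuclideanSpace ℝ (Fin din)) (hn : ‖n‖ = 1)
    (hnconv : Tendsto ns atTop (nhds n))
    (os : ℕ → ℝ) (o : ℝ) (hoconv : Tendsto os atTop (nhds o))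
    (δs : ℕ → EuclideanSpace ℝ (Fin din)) (δ : EuclideanSpace ℝ (Fin din))
    (hδconv : Tendsto δs atTop (nhds δ))
    (bs : ℕ → ℝ) (𝔟 : ℝ) (hbconv : Tendsto bs atTop (nhds 𝔟))
    (hincl : ∀ m, {x : EuclideanSpace ℝ (Fin din) | (inner ℝ (ns m) x : ℝ) = os m} ⊆
      {x : EuclideanSpace ℝ (Fin din) | (inner ℝ (δs m) x : ℝ) + bs m = 0}) :
    ({x : EuclideanSpace ℝ (Fin din) | (inner ℝ n x : ℝ) = o} ⊆
      {x : EuclideanSpace ℝ (Fin din) | (inner ℝ δ x : ℝ) + 𝔟 = 0}) ∧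
    (∃ c : ℝ, δ = c • n) ∧ (inner ℝ δ (o • n) : ℝ) + 𝔟 = 0 := by
  have hlim := hyperplane_subset_of_tendsto hns hnconv hoconv hδconv hbconv hincl
  have hon : inner ℝ n (o • n) = o := by
    rw [real_inner_smul_right, real_inner_self_eq_norm_sq, hn]
    ring
  exact ⟨hlim, ⟨_, eq_inner_smul_of_hyperplane_subset hn hlim⟩, hlim hon⟩

/-- continuity (multiplicity one) of summands passes to the limit:
if each hyperplane `{n⁽ᵐ⁾·x = o⁽ᵐ⁾}` is contained in the zero set of
`δ⁽ᵐ⁾·x + 𝔟⁽ᵐ⁾` and all data converge, then the limit hyperplane is contained in the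
zero set of `δ·x + 𝔟`; moreover `δ` is a multiple of `n` and `δ·(o n) + 𝔟 = 0`. -/
theorem stmt19 (din : ℕ) (hdin : 1 ≤ din)
    (ns : ℕ → EuclideanSpace ℝ (Fin din)) (hns : ∀ m, ‖ns m‖ = 1)
    (n : EuclideanSpace ℝ (Fin din)) (hn : ‖n‖ = 1)
    (hnconv : Tendsto ns atTop (nhds n))
    (os : ℕ → ℝ) (o : ℝ) (hoconv : Tendsto os atTop (nhds o))
    (δs : ℕ → EuclideanSpace ℝ (Fin din)) (δ : EuclideanSpace ℝ (Fin din))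
    (hδconv : Tendsto δs atTop (nhds δ))
    (bs : ℕ → ℝ) (𝔟 : ℝ) (hbconv : Tendsto bs atTop (nhds 𝔟))
    (hincl : ∀ m, {x : EuclideanSpace ℝ (Fin din) | (inner ℝ (ns m) x : ℝ) = os m} ⊆
      {x : EuclideanSpace ℝ (Fin din) | (inner ℝ (δs m) x : ℝ) + bs m = 0}) :
    ({x : EuclideanSpace ℝ (Fin din) | (inner ℝ n x : ℝ) = o} ⊆
      {x : EuclideanSpace ℝ (Fin din) | (inner ℝ δ x : ℝ) + 𝔟 = 0}) ∧
    (∃ c : ℝ, δ = c • n) ∧ (inner ℝ δ (o • n) : ℝ) + 𝔟 = 0 :=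
  stmt19_general din ns hns n hn hnconv os o hoconv δs δ hδconv bs 𝔟 hbconv hincl
end
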